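/- Let (X,Y,A) be finitely-valued random variables and let A'₁,…,A'_k be variables such that each (X,Y,A'_i) has the same distribution as (X,Y,A), and A'₁,…,A'_k, A are mutually conditionally independent given (X,Y). Then H(A'₁,…,A'_k | X) ≤ k·H(A|X) and H(A'₁,…,A'_k | X,Y) = k·H(A|X,Y); consequently I(A'₁,…,A'_k : Y | X) ≤ k·I(A:Y|X). -/

import Mathlib

open scoped BigOperators

namespace PaperIngleton

open Classical in
/-- Probability of an event under a pmf `p` on a finite sample space. -/
noncomputable def prob {Ω : Type*} [Fintype Ω] (p : Ω → ℝ) (E : Ω → Prop) : ℝ :=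
  ∑ ω, if E ω then p ω else 0

/-- Shannon entropy of a finitely-valued random variable `X` under pmf `p`. -/
noncomputable def ent {Ω S : Type*} [Fintype Ω] [Fintype S] (p : Ω → ℝ) (X : Ω → S) : ℝ :=
  -∑ s : S, prob p (fun ω => X ω = s) * Real.log (prob p (fun ω => X ω = s))

/-- Conditional entropy `H(X|Y)`. -/
noncomputable def condEnt {Ω S T : Type*} [Fintype Ω] [Fintype S] [Fintype T]
    (p : Ω → ℝ) (X : Ω → S) (Y : Ω → T) : ℝ :=
  ent p (fun ω => (X ω, Y ω)) - ent p Y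

/-- Mutual information `I(X:Y)`. -/
noncomputable def mi {Ω S T : Type*} [Fintype Ω] [Fintype S] [Fintype T]
    (p : Ω → ℝ) (X : Ω → S) (Y : Ω → T) : ℝ :=
  ent p X + ent p Y - ent p (fun ω => (X ω, Y ω))

/-- Conditional mutual information `I(X:Y|Z)`. -/
noncomputable def cmi {Ω S T U : Type*} [Fintype Ω] [Fintype S] [Fintype T] [Fintype U]
    (p : Ω → ℝ) (X : Ω → S) (Y : Ω → T) (Z : Ω → U) : ℝ :=
  ent p (fun ω => (X ω, Z ω)) + ent p (fun ω => (Y ω, Z ω))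
    - ent p (fun ω => (X ω, Y ω, Z ω)) - ent p Z

end PaperIngleton

/-!
Put `Z = X` or `Z = (X, Y)`. Conditional entropy is subadditive,
`H(A'₁, …, A'ₖ | Z) ≤ ∑ᵢ H(A'ᵢ | Z)`: by Gibbs' inequality, compare the joint law of `(A', Z)`
with the law `P(z) ∏ᵢ P(aᵢ | z)`, which has the same pair marginals but makes the `A'ᵢ`
conditionally independent given `Z`; the cross entropy against it is exactly
`H(Z) + ∑ᵢ H(A'ᵢ | Z)`. Under conditional independence given `(X, Y)` the two laws coincide, so
equality holds there. Each `(A'ᵢ, X, Y)` is distributed as `(A, X, Y)`, so every summand is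
`H(A | Z)`, and the mutual information bound follows from
`I(A' : Y | X) = H(A' | X) - H(A' | X, Y)`.
-/

namespace PaperIngleton

section Probability

variable {Ω α β : Type*} [Fintype Ω] {p : Ω → ℝ}

lemma prob_congr {E E' : Ω → Prop} (h : ∀ ω, E ω ↔ E' ω) : prob p E = prob p E' := by
  rw [funext fun ω => propext (h ω)]

lemma prob_nonneg (hp : ∀ ω, 0 ≤ p ω) (E : Ω → Prop) : 0 ≤ prob p E :=
  Finset.sum_nonneg fun ω _ => by split_ifs <;> simp [hp ω]

lemma prob_mono (hp : ∀ ω, 0 ≤ p ω) {E E' : Ω → Prop} (h : ∀ ω, E ω → E' ω) :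
    prob p E ≤ prob p E' :=
  Finset.sum_le_sum fun ω _ => by
    split_ifs with h₁ h₂
    exacts [le_rfl, absurd (h ω h₁) h₂, hp ω, le_rfl]

lemma sum_prob_and [Fintype β] (E : Ω → Prop) (G : Ω → β) :
    ∑ b, prob p (fun ω => E ω ∧ G ω = b) = prob p E := by
  classical
  unfold prob
  rw [Finset.sum_comm]
  refine Finset.sum_congr rfl fun ω _ => ?_
  by_cases h : E ω <;> simp [h]

lemma sum_prob_mul [Fintype α] (F : Ω → α) (g : α → ℝ) :
    ∑ a, prob p (fun ω => F ω = a) * g a = ∑ ω, p ω * g (F ω) := by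
  classical
  unfold prob
  simp only [Finset.sum_mul, ite_mul, zero_mul]
  rw [Finset.sum_comm]
  simp

lemma sum_prob_eq_one (hp1 : ∑ ω, p ω = 1) [Fintype α] (F : Ω → α) :
    ∑ a, prob p (fun ω => F ω = a) = 1 := by
  simpa [hp1] using sum_prob_mul (p := p) F (fun _ => 1)

lemma sum_prob_pair_eq_prob [Fintype α] (F : Ω → α) (Z : Ω → β) (z : β) :
    ∑ a, prob p (fun ω => (F ω, Z ω) = (a, z)) = prob p (fun ω => Z ω = z) := by
  rw [← sum_prob_and (fun ω => Z ω = z) F]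
  exact Finset.sum_congr rfl fun a _ => prob_congr fun ω => by simp [and_comm]

lemma prob_comp_pos (hp : ∀ ω, 0 ≤ p ω) {F : Ω → α} {a : α}
    (ha : 0 < prob p (fun ω => F ω = a)) (φ : α → β) :
    0 < prob p (fun ω => φ (F ω) = φ a) :=
  ha.trans_le (prob_mono hp fun ω h => by rw [h])

end Probability

section Entropy

variable {Ω α β : Type*} [Fintype Ω] [Fintype α] [Fintype β] {p : Ω → ℝ}

lemma ent_eq_neg_sum_mul_log (F : Ω → α) :
    ent p F = -∑ ω, p ω * Real.log (prob p (fun ω' => F ω' = F ω)) := by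
  rw [ent, sum_prob_mul F fun a => Real.log (prob p fun ω => F ω = a)]

lemma ent_congr {F G : Ω → α}
    (h : ∀ a, prob p (fun ω => F ω = a) = prob p (fun ω => G ω = a)) : ent p F = ent p G := by
  simp only [ent, h]

lemma ent_comp_of_injective (F : Ω → α) {φ : α → β} (hφ : Function.Injective φ) :
    ent p (fun ω => φ (F ω)) = ent p F := by
  simp only [ent_eq_neg_sum_mul_log, hφ.eq_iff]

lemma sum_prob_mul_log_prob_comp (F : Ω → α) (φ : α → β) :
    ∑ a, prob p (fun ω => F ω = a) * Real.log (prob p (fun ω => φ (F ω) = φ a))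
      = -ent p (fun ω => φ (F ω)) := by
  rw [ent_eq_neg_sum_mul_log, neg_neg,
    sum_prob_mul F fun a => Real.log (prob p fun ω => φ (F ω) = φ a)]

lemma sum_mul_log_le_sum_mul_log {r q : α → ℝ} (hr : ∀ a, 0 ≤ r a) (hr1 : ∑ a, r a = 1)
    (hq : ∀ a, 0 ≤ q a) (hq1 : ∑ a, q a ≤ 1) (hpos : ∀ a, 0 < r a → 0 < q a) :
    ∑ a, r a * Real.log (q a) ≤ ∑ a, r a * Real.log (r a) := by
  have key : ∀ a, r a * Real.log (q a) - r a * Real.log (r a) ≤ q a - r a := by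
    intro a
    rcases (hr a).eq_or_lt with h | h
    · simp [← h, hq a]
    · have hqa := hpos a h
      calc r a * Real.log (q a) - r a * Real.log (r a) = r a * Real.log (q a / r a) := by
            rw [Real.log_div hqa.ne' h.ne']; ring
        _ ≤ r a * (q a / r a - 1) := by
            gcongr; exact Real.log_le_sub_one_of_pos (div_pos hqa h)
        _ = q a - r a := by field_simp
  have := Finset.sum_le_sum fun a (_ : a ∈ Finset.univ) => key a
  rw [Finset.sum_sub_distrib, Finset.sum_sub_distrib, hr1] at this
  linarith

end Entropy

section CondProdLaw

variable {Ω ι U V : Type*} [Fintype Ω] [Fintype ι] {p : Ω → ℝ}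

variable (p) in
/-- `P(Z = z) ∏ᵢ P(Aᵢ = aᵢ | Z = z)`, evaluated at `a = (aᵢ, z)`. -/
noncomputable def condProdLaw (A : ι → Ω → U) (Z : Ω → V) (a : (ι → U) × V) : ℝ :=
  prob p (fun ω => Z ω = a.2) *
    ∏ i, prob p (fun ω => (A i ω, Z ω) = (a.1 i, a.2)) / prob p (fun ω => Z ω = a.2)

variable {A : ι → Ω → U} {Z : Ω → V}

lemma condProdLaw_nonneg (hp : ∀ ω, 0 ≤ p ω) (a : (ι → U) × V) :
    0 ≤ condProdLaw p A Z a :=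
  mul_nonneg (prob_nonneg hp _)
    (Finset.prod_nonneg fun _ _ => div_nonneg (prob_nonneg hp _) (prob_nonneg hp _))

lemma condProdLaw_pos (hp : ∀ ω, 0 ≤ p ω) {a : (ι → U) × V}
    (ha : 0 < prob p (fun ω => (fun i => A i ω, Z ω) = a)) : 0 < condProdLaw p A Z a :=
  mul_pos (prob_comp_pos hp ha Prod.snd) (Finset.prod_pos fun i _ =>
    div_pos (prob_comp_pos hp ha fun a => (a.1 i, a.2)) (prob_comp_pos hp ha Prod.snd))

lemma log_condProdLaw (hp : ∀ ω, 0 ≤ p ω) {a : (ι → U) × V}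
    (ha : 0 < prob p (fun ω => (fun i => A i ω, Z ω) = a)) :
    Real.log (condProdLaw p A Z a) = Real.log (prob p (fun ω => Z ω = a.2)) +
      ∑ i, (Real.log (prob p (fun ω => (A i ω, Z ω) = (a.1 i, a.2)))
        - Real.log (prob p (fun ω => Z ω = a.2))) := by
  have hz : 0 < prob p (fun ω => Z ω = a.2) := prob_comp_pos hp ha Prod.snd
  have hi : ∀ i, 0 < prob p (fun ω => (A i ω, Z ω) = (a.1 i, a.2)) := fun i =>
    prob_comp_pos hp ha fun a => (a.1 i, a.2)
  have hq : ∀ i ∈ Finset.univ,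
      prob p (fun ω => (A i ω, Z ω) = (a.1 i, a.2)) / prob p (fun ω => Z ω = a.2) ≠ 0 :=
    fun i _ => (div_pos (hi i) hz).ne'
  rw [condProdLaw, Real.log_mul hz.ne' (Finset.prod_ne_zero_iff.mpr hq), Real.log_prod hq]
  simp only [Real.log_div (hi _).ne' hz.ne']

lemma prob_eq_condProdLaw_of_condIndep (hp : ∀ ω, 0 ≤ p ω)
    (h : ∀ z (as : ι → U),
      prob p (fun ω => Z ω = z ∧ ∀ i, A i ω = as i)
          * prob p (fun ω => Z ω = z) ^ Fintype.card ι
        = prob p (fun ω => Z ω = z) * ∏ i, prob p (fun ω => Z ω = z ∧ A i ω = as i))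
    (a : (ι → U) × V) :
    prob p (fun ω => (fun i => A i ω, Z ω) = a) = condProdLaw p A Z a := by
  obtain ⟨as, z⟩ := a
  have hjoint : prob p (fun ω => (fun i => A i ω, Z ω) = (as, z))
      = prob p (fun ω => Z ω = z ∧ ∀ i, A i ω = as i) :=
    prob_congr fun ω => by simp only [Prod.mk.injEq, funext_iff, and_comm]
  have hpair : ∀ i, prob p (fun ω => (A i ω, Z ω) = (as i, z))
      = prob p (fun ω => Z ω = z ∧ A i ω = as i) :=
    fun i => prob_congr fun ω => by simp only [Prod.mk.injEq, and_comm]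
  simp only [condProdLaw, hjoint, hpair]
  rcases (prob_nonneg hp fun ω => Z ω = z).eq_or_lt with hz | hz
  · rw [← hz, zero_mul]
    exact le_antisymm (hz ▸ prob_mono hp fun ω hω => hω.1) (prob_nonneg hp _)
  · rw [Finset.prod_div_distrib, Finset.prod_const, Finset.card_univ, ← mul_div_assoc, ← h,
      mul_div_cancel_right₀ _ (pow_pos hz _).ne']

variable [DecidableEq ι] [Fintype U] [Fintype V]

lemma sum_condProdLaw (hp1 : ∑ ω, p ω = 1) : ∑ a, condProdLaw p A Z a = 1 := by
  rw [Fintype.sum_prod_type_right, ← sum_prob_eq_one hp1 Z]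
  refine Finset.sum_congr rfl fun z _ => ?_
  calc ∑ as : ι → U, condProdLaw p A Z (as, z)
      = prob p (fun ω => Z ω = z) * ∏ i,
          ∑ u, prob p (fun ω => (A i ω, Z ω) = (u, z)) / prob p (fun ω => Z ω = z) := by
        simp only [condProdLaw, Fintype.prod_sum, Finset.mul_sum]
    _ = prob p (fun ω => Z ω = z) *
          (prob p (fun ω => Z ω = z) / prob p (fun ω => Z ω = z)) ^ Fintype.card ι := by
        simp only [← Finset.sum_div, sum_prob_pair_eq_prob, Finset.prod_const, Finset.card_univ]
    _ = prob p (fun ω => Z ω = z) := by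
        rcases eq_or_ne (prob p (fun ω => Z ω = z)) 0 with h | h
        · simp [h]
        · rw [div_self h, one_pow, mul_one]

lemma sum_prob_mul_log_condProdLaw (hp : ∀ ω, 0 ≤ p ω) :
    ∑ a, prob p (fun ω => (fun i => A i ω, Z ω) = a) * Real.log (condProdLaw p A Z a)
      = -ent p Z - ∑ i, condEnt p (A i) Z := by
  set r := fun a => prob p (fun ω => (fun i => A i ω, Z ω) = a)
  have hZ : ∑ a, r a * Real.log (prob p (fun ω => Z ω = a.2)) = -ent p Z :=
    sum_prob_mul_log_prob_comp (fun ω => (fun i => A i ω, Z ω)) Prod.snd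
  have hAZ : ∀ i, ∑ a, r a * Real.log (prob p (fun ω => (A i ω, Z ω) = (a.1 i, a.2)))
      = -ent p (fun ω => (A i ω, Z ω)) := fun i =>
    sum_prob_mul_log_prob_comp (fun ω => (fun i => A i ω, Z ω)) fun a => (a.1 i, a.2)
  calc ∑ a, r a * Real.log (condProdLaw p A Z a)
      = ∑ a, r a * (Real.log (prob p (fun ω => Z ω = a.2)) +
          ∑ i, (Real.log (prob p (fun ω => (A i ω, Z ω) = (a.1 i, a.2)))
            - Real.log (prob p (fun ω => Z ω = a.2)))) := by
        refine Finset.sum_congr rfl fun a _ => ?_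
        rcases (prob_nonneg hp (fun ω => (fun i => A i ω, Z ω) = a)).eq_or_lt with h | h
        · simp only [r, ← h, zero_mul]
        · rw [log_condProdLaw hp h]
    _ = ∑ a, r a * Real.log (prob p (fun ω => Z ω = a.2)) +
          ∑ i, (∑ a, r a * Real.log (prob p (fun ω => (A i ω, Z ω) = (a.1 i, a.2)))
            - ∑ a, r a * Real.log (prob p (fun ω => Z ω = a.2))) := by
        simp only [mul_add, Finset.mul_sum, mul_sub, Finset.sum_add_distrib,
          Finset.sum_sub_distrib]
        congr 1
        congr 1 <;> exact Finset.sum_comm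
    _ = -ent p Z - ∑ i, condEnt p (A i) Z := by
        simp only [hZ, hAZ, condEnt, Finset.sum_sub_distrib, Finset.sum_neg_distrib]
        ring

theorem condEnt_pi_le_sum (hp : ∀ ω, 0 ≤ p ω) (hp1 : ∑ ω, p ω = 1) :
    condEnt p (fun ω i => A i ω) Z ≤ ∑ i, condEnt p (A i) Z := by
  have gibbs := sum_mul_log_le_sum_mul_log (fun a => prob_nonneg hp _) (sum_prob_eq_one hp1 _)
    (condProdLaw_nonneg hp) (sum_condProdLaw hp1).le (fun a => condProdLaw_pos (A := A) (Z := Z) hp)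
  rw [sum_prob_mul_log_condProdLaw hp] at gibbs
  rw [condEnt, ent]
  linarith

theorem condEnt_pi_eq_sum_of_eq_condProdLaw (hp : ∀ ω, 0 ≤ p ω)
    (h : ∀ a, prob p (fun ω => (fun i => A i ω, Z ω) = a) = condProdLaw p A Z a) :
    condEnt p (fun ω i => A i ω) Z = ∑ i, condEnt p (A i) Z := by
  have := sum_prob_mul_log_condProdLaw (A := A) (Z := Z) hp
  simp only [← h] at this
  rw [condEnt, ent]
  linarith

end CondProdLaw

section ConditionalEntropy

variable {Ω S T U : Type*} [Fintype Ω] [Fintype S] [Fintype T] [Fintype U] {p : Ω → ℝ}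

lemma condEnt_congr {F G : Ω → U} {Z : Ω → S}
    (h : ∀ a z,
      prob p (fun ω => (F ω, Z ω) = (a, z)) = prob p (fun ω => (G ω, Z ω) = (a, z))) :
    condEnt p F Z = condEnt p G Z := by
  rw [condEnt, condEnt, ent_congr fun s => h s.1 s.2]

lemma cmi_eq_condEnt_sub_condEnt (F : Ω → U) (Y : Ω → T) (X : Ω → S) :
    cmi p F Y X = condEnt p F X - condEnt p F (fun ω => (X ω, Y ω)) := by
  have hYX : ent p (fun ω => (Y ω, X ω)) = ent p (fun ω => (X ω, Y ω)) :=
    ent_comp_of_injective (fun ω => (X ω, Y ω)) Prod.swap_injective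
  have hFYX : ent p (fun ω => (F ω, Y ω, X ω)) = ent p (fun ω => (F ω, X ω, Y ω)) :=
    ent_comp_of_injective (fun ω => (F ω, X ω, Y ω))
      (Function.injective_id.prodMap Prod.swap_injective)
  rw [cmi, condEnt, condEnt, hYX, hFYX]
  ring

end ConditionalEntropy

theorem stmt11 {Ω S T U : Type} [Fintype Ω] [Fintype S] [Fintype T] [Fintype U]
    (p : Ω → ℝ) (hp : ∀ ω, 0 ≤ p ω) (hp1 : ∑ ω, p ω = 1)
    (X : Ω → S) (Y : Ω → T) (A : Ω → U) (k : ℕ) (A' : Fin k → Ω → U)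
    -- each (X,Y,A'_i) is distributed as (X,Y,A)
    (hdist : ∀ i x y a, prob p (fun ω => X ω = x ∧ Y ω = y ∧ A' i ω = a)
                      = prob p (fun ω => X ω = x ∧ Y ω = y ∧ A ω = a))
    -- A'_1,…,A'_k, A are mutually conditionally independent given (X,Y)
    (hci : ∀ x y (as : Fin k → U) (a : U),
        prob p (fun ω => X ω = x ∧ Y ω = y ∧ (∀ i, A' i ω = as i) ∧ A ω = a)
          * (prob p (fun ω => X ω = x ∧ Y ω = y)) ^ k
        = prob p (fun ω => X ω = x ∧ Y ω = y ∧ A ω = a)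
          * ∏ i, prob p (fun ω => X ω = x ∧ Y ω = y ∧ A' i ω = as i)) :
    condEnt p (fun ω (i : Fin k) => A' i ω) X ≤ k * condEnt p A X ∧
    condEnt p (fun ω (i : Fin k) => A' i ω) (fun ω => (X ω, Y ω))
      = k * condEnt p A (fun ω => (X ω, Y ω)) ∧
    cmi p (fun ω (i : Fin k) => A' i ω) Y X ≤ k * cmi p A Y X := by
  have hlawXY : ∀ i,
      condEnt p (A' i) (fun ω => (X ω, Y ω)) = condEnt p A (fun ω => (X ω, Y ω)) :=
    fun i => condEnt_congr fun a ⟨x, y⟩ => by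
      simpa only [Prod.mk.injEq, and_comm, and_assoc, and_left_comm] using hdist i x y a
  have hlawX : ∀ i, condEnt p (A' i) X = condEnt p A X := by
    refine fun i => condEnt_congr fun a x => ?_
    rw [← sum_prob_and _ Y, ← sum_prob_and _ Y]
    refine Finset.sum_congr rfl fun y _ => ?_
    simpa only [Prod.mk.injEq, and_comm, and_assoc, and_left_comm] using hdist i x y a
  have hindep : ∀ (z : S × T) (as : Fin k → U),
      prob p (fun ω => (X ω, Y ω) = z ∧ ∀ i, A' i ω = as i)
          * prob p (fun ω => (X ω, Y ω) = z) ^ Fintype.card (Fin k)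
        = prob p (fun ω => (X ω, Y ω) = z)
          * ∏ i, prob p (fun ω => (X ω, Y ω) = z ∧ A' i ω = as i) := by
    rintro ⟨x, y⟩ as
    have hsum := Finset.sum_congr rfl fun a (_ : a ∈ Finset.univ) => hci x y as a
    simp only [← Finset.sum_mul, ← and_assoc] at hsum
    simpa only [Prod.mk.injEq, Fintype.card_fin, sum_prob_and] using hsum
  have hX : condEnt p (fun ω (i : Fin k) => A' i ω) X ≤ k * condEnt p A X := by
    simpa only [hlawX, Finset.sum_const, Finset.card_univ, Fintype.card_fin, nsmul_eq_mul]
      using condEnt_pi_le_sum (A := A') (Z := X) hp hp1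
  have hXY : condEnt p (fun ω (i : Fin k) => A' i ω) (fun ω => (X ω, Y ω))
      = k * condEnt p A (fun ω => (X ω, Y ω)) := by
    simpa only [hlawXY, Finset.sum_const, Finset.card_univ, Fintype.card_fin, nsmul_eq_mul]
      using condEnt_pi_eq_sum_of_eq_condProdLaw hp (prob_eq_condProdLaw_of_condIndep hp hindep)
  refine ⟨hX, hXY, ?_⟩
  rw [cmi_eq_condEnt_sub_condEnt, cmi_eq_condEnt_sub_condEnt, hXY]
  linarith

end PaperIngleton
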